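/- With a(t,b) and c(t,b) as in the simple tangency condition (a(t,b) = (-b(t^3+2t^2-1)+t^5-5t^3-5t^2-3)/(2t^2(t-1)(t^2+t-1)), c(t,b) = -(b t^2(t^3-2t+1)+3t^5+5t^3-5t^2+1)/(2(t+1)(t^2+t-1))), for any t1, t2 not in {0, ±1, roots of t^2+t-1} and any b, one has the identity (a(t1,b) - a(t2,b))·t1^2 t2^2 (t1-1)(t2-1) + (c(t1,b) - c(t2,b))·(t1+1)(t2+1) = 3(t1 - t2)^3 (t1^2 + 3 t1 t2 + t2^2) / ((t1^2 + t1 - 1)(t2^2 + t2 - 1)). In particular, this expression is independent of b. -/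

import Mathlib

/-!
Since `t³ + 2t² - 1 = (t + 1)(t² + t - 1)` and `t³ - 2t + 1 = (t - 1)(t² + t - 1)`, clearing the
`t`-dependent factors of the denominators gives `a(t,b)·t²(t-1) = F(t) - b(t+1)/2` and
`c(t,b)·(t+1) = G(t) - b·t²(t-1)/2` with `F`, `G` free of `b`. The left-hand side is the
antisymmetrisation `x₁y₂ - x₂y₁` of these in `(t₁, t₂)` against `t²(t-1)` and `t+1`, so the
`b`-terms cancel crosswise and what remains is a rational identity in `t₁, t₂` alone.
-/

/-- Coefficient `a(t,b)` of a section simply tangent to the curve at parameter `t`. -/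
noncomputable def tanA (t b : ℝ) : ℝ :=
  (-b * (t ^ 3 + 2 * t ^ 2 - 1) + t ^ 5 - 5 * t ^ 3 - 5 * t ^ 2 - 3) /
    (2 * t ^ 2 * (t - 1) * (t ^ 2 + t - 1))

/-- Coefficient `c(t,b)` of a section simply tangent to the curve at parameter `t`. -/
noncomputable def tanC (t b : ℝ) : ℝ :=
  -(b * t ^ 2 * (t ^ 3 - 2 * t + 1) + 3 * t ^ 5 + 5 * t ^ 3 - 5 * t ^ 2 + 1) /
    (2 * (t + 1) * (t ^ 2 + t - 1))

lemma tanA_mul_eq (b : ℝ) {t : ℝ} (h0 : t ≠ 0) (h1 : t ≠ 1) (hq : t ^ 2 + t - 1 ≠ 0) :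
    tanA t b * (t ^ 2 * (t - 1)) =
      (t ^ 5 - 5 * t ^ 3 - 5 * t ^ 2 - 3) / (2 * (t ^ 2 + t - 1)) - b * (t + 1) / 2 := by
  have h1' : t - 1 ≠ 0 := sub_ne_zero.mpr h1
  -- `field_simp` rewrites `t ^ 2 + t - 1` to this form before looking for nonvanishing facts
  have hq' : t * (t + 1) - 1 ≠ 0 := by convert hq using 1; ring
  unfold tanA
  field_simp
  ring

lemma tanC_mul_eq (b : ℝ) {t : ℝ} (h : t ≠ -1) (hq : t ^ 2 + t - 1 ≠ 0) :
    tanC t b * (t + 1) =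
      -(3 * t ^ 5 + 5 * t ^ 3 - 5 * t ^ 2 + 1) / (2 * (t ^ 2 + t - 1)) -
        b * (t ^ 2 * (t - 1)) / 2 := by
  have h' : t + 1 ≠ 0 := by rwa [← sub_neg_eq_add, sub_ne_zero]
  have hq' : t * (t + 1) - 1 ≠ 0 := by convert hq using 1; ring
  unfold tanC
  field_simp
  ring

theorem stmt11 (t₁ t₂ b : ℝ)
    (h10 : t₁ ≠ 0) (h11 : t₁ ≠ 1) (h12 : t₁ ≠ -1) (h13 : t₁ ^ 2 + t₁ - 1 ≠ 0)
    (h20 : t₂ ≠ 0) (h21 : t₂ ≠ 1) (h22 : t₂ ≠ -1) (h23 : t₂ ^ 2 + t₂ - 1 ≠ 0) :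
    (tanA t₁ b - tanA t₂ b) * t₁ ^ 2 * t₂ ^ 2 * (t₁ - 1) * (t₂ - 1) +
      (tanC t₁ b - tanC t₂ b) * (t₁ + 1) * (t₂ + 1) =
    3 * (t₁ - t₂) ^ 3 * (t₁ ^ 2 + 3 * t₁ * t₂ + t₂ ^ 2) /
      ((t₁ ^ 2 + t₁ - 1) * (t₂ ^ 2 + t₂ - 1)) := by
  calc _ = tanA t₁ b * (t₁ ^ 2 * (t₁ - 1)) * (t₂ ^ 2 * (t₂ - 1))
          - tanA t₂ b * (t₂ ^ 2 * (t₂ - 1)) * (t₁ ^ 2 * (t₁ - 1))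
          + tanC t₁ b * (t₁ + 1) * (t₂ + 1) - tanC t₂ b * (t₂ + 1) * (t₁ + 1) := by ring
    _ = _ := by
      rw [tanA_mul_eq b h10 h11 h13, tanA_mul_eq b h20 h21 h23,
        tanC_mul_eq b h12 h13, tanC_mul_eq b h22 h23]
      have hq₁ : t₁ * (t₁ + 1) - 1 ≠ 0 := by convert h13 using 1; ring
      have hq₂ : t₂ * (t₂ + 1) - 1 ≠ 0 := by convert h23 using 1; ring
      field_simp
      ring
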